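/- arXiv:2007.02037 — 4 statements merged into one kernel-verified Lean document; each statement's English description precedes it below -/
import Mathlib

section
/- Suppose a nonnegative random variable X satisfies P(X > x) = β x^{-1/γ}{1 + C x^{-δ} + o(x^{-δ})} as x → ∞, with β, γ, δ > 0 and C ∈ ℝ. Then as u → ∞, E[log(X/u) · 1{X > u}] = β γ u^{-1/γ} + (β C / (1/γ + δ)) u^{-1/γ - δ} + o(u^{-1/γ - δ}). -/
/-!
By the layer-cake formula, `E[log(X/u); X > u] = ∫₀^∞ P(X > u eᵗ) dt`. Substituting
`P(x < X) = β x^{-1/γ} + βC x^{-1/γ-δ} + h(x)` with `h(x) = o(x^{-1/γ-δ})`, the two power terms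
integrate exactly, since `(u eᵗ)^b = u^b e^{bt}` and `∫₀^∞ e^{bt} dt = -1/b` for `b < 0`. For the
remainder, `|h(u eᵗ)| ≤ ε (u eᵗ)^{-1/γ-δ}` for all `t > 0` once `u` is large, which integrates
to `ε u^{-1/γ-δ}/(1/γ+δ)`.
-/

open Filter Real Asymptotics MeasureTheory Set

section LayerCake

variable {α : Type*} [MeasurableSpace α] {μ : Measure α} [IsFiniteMeasure μ]

theorem antitone_measureReal_lt (f : α → ℝ) : Antitone fun t : ℝ => μ.real {ω | t < f ω} :=
  fun _ _ hst => measureReal_mono fun _ hω => hst.trans_lt hω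

theorem integral_eq_integral_meas_lt_of_nonneg {f : α → ℝ} (hf : 0 ≤ᵐ[μ] f)
    (hfm : AEMeasurable f μ) :
    ∫ ω, f ω ∂μ = ∫ t in Ioi 0, μ.real {ω | t < f ω} := by
  rw [integral_eq_lintegral_of_nonneg_ae hf hfm.aestronglyMeasurable,
    integral_eq_lintegral_of_nonneg_ae (Eventually.of_forall fun _ => measureReal_nonneg)
      (antitone_measureReal_lt f).measurable.aestronglyMeasurable,
    lintegral_eq_lintegral_meas_lt μ hf hfm]
  simp only [measureReal_def, ENNReal.ofReal_toReal (measure_ne_top μ _)]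

theorem setIntegral_log_div_eq_integral_meas_lt {X : α → ℝ} (hX : Measurable X) {u : ℝ}
    (hu : 0 < u) :
    ∫ ω in {ω | u < X ω}, log (X ω / u) ∂μ = ∫ t in Ioi 0, μ.real {ω | u * exp t < X ω} := by
  have hS : MeasurableSet {ω | u < X ω} := measurableSet_lt measurable_const hX
  set f := {ω | u < X ω}.indicator fun ω => log (X ω / u)
  have hf : 0 ≤ f := indicator_nonneg fun ω (hω : u < X ω) =>
    log_nonneg ((one_le_div hu).mpr hω.le)
  have hlevel : ∀ t ∈ Ioi (0 : ℝ), {ω | t < f ω} = {ω | u * exp t < X ω} := by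
    intro t (ht : 0 < t)
    ext ω
    by_cases hω : u < X ω
    · simp [f, hω, lt_log_iff_exp_lt (div_pos (hu.trans hω) hu), lt_div_iff₀ hu, mul_comm]
    · have : ¬ u * exp t < X ω := fun h =>
        hω ((le_mul_of_one_le_right hu.le (one_le_exp ht.le)).trans_lt h)
      simp [f, hω, this, ht.not_gt]
  rw [← integral_indicator hS,
    integral_eq_integral_meas_lt_of_nonneg (Eventually.of_forall hf)
      (((hX.div_const u).log).indicator hS).aemeasurable]
  exact setIntegral_congr_fun measurableSet_Ioi fun t ht => by rw [hlevel t ht]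

end LayerCake

section ExponentialSubstitution

theorem mul_exp_rpow {u : ℝ} (hu : 0 < u) (t b : ℝ) : (u * exp t) ^ b = u ^ b * exp (b * t) := by
  rw [mul_rpow hu.le (exp_pos t).le, ← exp_mul, mul_comm t b]

variable {u b : ℝ}

theorem integrableOn_mul_exp_rpow_Ioi (hu : 0 < u) (hb : b < 0) :
    IntegrableOn (fun t => (u * exp t) ^ b) (Ioi 0) := by
  simp only [mul_exp_rpow hu]
  exact (integrableOn_exp_mul_Ioi hb 0).const_mul _

theorem integral_mul_exp_rpow_Ioi (hu : 0 < u) (hb : b < 0) :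
    ∫ t in Ioi 0, (u * exp t) ^ b = -u ^ b / b := by
  simp only [mul_exp_rpow hu, integral_const_mul, integral_exp_mul_Ioi hb, mul_zero, exp_zero]
  ring

theorem eventually_forall_mul_exp {P : ℝ → Prop} (h : ∀ᶠ x in atTop, P x) :
    ∀ᶠ u in atTop, ∀ t ∈ Ioi (0 : ℝ), P (u * exp t) := by
  obtain ⟨M, hM⟩ := eventually_atTop.mp h
  filter_upwards [eventually_ge_atTop M, eventually_gt_atTop 0] with u huM hu t ht
  exact hM _ (huM.trans (le_mul_of_one_le_right hu.le (one_le_exp (le_of_lt ht))))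

variable {g : ℝ → ℝ}

theorem Asymptotics.IsBigO.eventually_integrableOn_comp_mul_exp (hb : b < 0) (hgm : Measurable g)
    (hg : g =O[atTop] fun x => x ^ b) :
    ∀ᶠ u in atTop, IntegrableOn (fun t => g (u * exp t)) (Ioi 0) := by
  obtain ⟨K, hK⟩ := hg.bound
  filter_upwards [eventually_forall_mul_exp hK, eventually_gt_atTop 0] with u hKu hu
  refine ((integrableOn_mul_exp_rpow_Ioi hu hb).const_mul K).mono'
    (hgm.comp (by fun_prop)).aestronglyMeasurable (ae_restrict_of_forall_mem measurableSet_Ioi ?_)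
  intro t ht
  simpa [abs_of_pos (rpow_pos_of_pos (mul_pos hu (exp_pos t)) b)] using hKu t ht

theorem Asymptotics.IsLittleO.integral_comp_mul_exp (hb : b < 0) (hg : g =o[atTop] fun x => x ^ b) :
    (fun u => ∫ t in Ioi 0, g (u * exp t)) =o[atTop] fun u => u ^ b := by
  refine isLittleO_iff.mpr fun c hc => ?_
  filter_upwards [eventually_forall_mul_exp (hg.def (mul_pos hc (neg_pos.mpr hb))),
    eventually_gt_atTop 0] with u hcu hu
  have hbound : ∀ t ∈ Ioi (0 : ℝ), ‖g (u * exp t)‖ ≤ c * -b * (u * exp t) ^ b := fun t ht => by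
    simpa [abs_of_pos (rpow_pos_of_pos (mul_pos hu (exp_pos t)) b)] using hcu t ht
  calc ‖∫ t in Ioi 0, g (u * exp t)‖
      ≤ ∫ t in Ioi 0, c * -b * (u * exp t) ^ b :=
        norm_integral_le_of_norm_le ((integrableOn_mul_exp_rpow_Ioi hu hb).const_mul _)
          (ae_restrict_of_forall_mem measurableSet_Ioi hbound)
    _ = c * ‖u ^ b‖ := by
        rw [integral_const_mul, integral_mul_exp_rpow_Ioi hu hb, norm_of_nonneg (by positivity)]
        field_simp [hb.ne]

end ExponentialSubstitution

theorem integral_two_term_rpow_comp_mul_exp {u γ δ : ℝ} (β C : ℝ) (hu : 0 < u) (hγ : 0 < γ)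
    (hδ : 0 < δ) :
    IntegrableOn (fun t => β * (u * exp t) ^ (-(1 / γ)) + β * C * (u * exp t) ^ (-(1 / γ) - δ))
      (Ioi 0) ∧
    ∫ t in Ioi 0, (β * (u * exp t) ^ (-(1 / γ)) + β * C * (u * exp t) ^ (-(1 / γ) - δ)) =
      β * γ * u ^ (-(1 / γ)) + β * C / (1 / γ + δ) * u ^ (-(1 / γ) - δ) := by
  have ha : -(1 / γ) < 0 := neg_neg_of_pos (one_div_pos.mpr hγ)
  have hb : -(1 / γ) - δ < 0 := by linarith
  have hIa := (integrableOn_mul_exp_rpow_Ioi hu ha).const_mul β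
  have hIb := (integrableOn_mul_exp_rpow_Ioi hu hb).const_mul (β * C)
  refine ⟨hIa.add hIb, ?_⟩
  rw [integral_add hIa hIb, integral_const_mul, integral_const_mul,
    integral_mul_exp_rpow_Ioi hu ha, integral_mul_exp_rpow_Ioi hu hb, ← neg_add', div_neg,
    neg_div, neg_neg]
  field_simp

theorem log_excess_expectation_expansion_general
    {Ω : Type*} [MeasurableSpace Ω] (μ : Measure Ω) [IsProbabilityMeasure μ]
    (X : Ω → ℝ) (hX : Measurable X)
    (β γ δ C : ℝ) (hγ : 0 < γ) (hδ : 0 < δ)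
    (hS : (fun x : ℝ => (μ {ω | x < X ω}).toReal - β * x ^ (-(1 / γ)) * (1 + C * x ^ (-δ)))
      =o[atTop] (fun x : ℝ => x ^ (-(1 / γ) - δ))) :
    (fun u : ℝ => (∫ ω in {ω | u < X ω}, Real.log (X ω / u) ∂μ) -
        (β * γ * u ^ (-(1 / γ)) + β * C / (1 / γ + δ) * u ^ (-(1 / γ) - δ)))
      =o[atTop] (fun u : ℝ => u ^ (-(1 / γ) - δ)) := by
  have hb : -(1 / γ) - δ < 0 := by linarith [one_div_pos.mpr hγ]
  set h : ℝ → ℝ := fun x =>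
    μ.real {ω | x < X ω} - (β * x ^ (-(1 / γ)) + β * C * x ^ (-(1 / γ) - δ))
  have hh : h =o[atTop] fun x => x ^ (-(1 / γ) - δ) := by
    refine hS.congr' ?_ EventuallyEq.rfl
    filter_upwards [eventually_gt_atTop 0] with x hx
    simp only [h, measureReal_def, sub_eq_add_neg (-(1 / γ)), rpow_add hx]
    ring
  have hhm : Measurable h := (antitone_measureReal_lt X).measurable.sub (by fun_prop)
  refine (hh.integral_comp_mul_exp hb).congr' ?_ EventuallyEq.rfl
  filter_upwards [hh.isBigO.eventually_integrableOn_comp_mul_exp hb hhm, eventually_gt_atTop 0]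
    with u hint hu
  obtain ⟨hmodel_int, hmodel⟩ := integral_two_term_rpow_comp_mul_exp β C hu hγ hδ
  have hsplit : ∀ t, μ.real {ω | u * exp t < X ω} = h (u * exp t) +
      (β * (u * exp t) ^ (-(1 / γ)) + β * C * (u * exp t) ^ (-(1 / γ) - δ)) :=
    fun t => (sub_add_cancel _ _).symm
  simp only [setIntegral_log_div_eq_integral_meas_lt hX hu, hsplit]
  rw [integral_add hint hmodel_int, hmodel, add_sub_cancel_right]

/-- If a nonnegative random variable `X` satisfies
`P(X > x) = β x^{-1/γ}(1 + C x^{-δ} + o(x^{-δ}))` as `x → ∞` with `β, γ, δ > 0`,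
then as `u → ∞`,
`E[log(X/u) 1{X > u}] = βγ u^{-1/γ} + (βC/(1/γ+δ)) u^{-1/γ-δ} + o(u^{-1/γ-δ})`. -/
theorem log_excess_expectation_expansion
    {Ω : Type*} [MeasurableSpace Ω] (μ : Measure Ω) [IsProbabilityMeasure μ]
    (X : Ω → ℝ) (hX : Measurable X) (hXpos : ∀ ω, 0 ≤ X ω)
    (β γ δ C : ℝ) (hβ : 0 < β) (hγ : 0 < γ) (hδ : 0 < δ)
    (hS : (fun x : ℝ => (μ {ω | x < X ω}).toReal - β * x ^ (-(1 / γ)) * (1 + C * x ^ (-δ)))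
      =o[atTop] (fun x : ℝ => x ^ (-(1 / γ) - δ))) :
    (fun u : ℝ => (∫ ω in {ω | u < X ω}, Real.log (X ω / u) ∂μ) -
        (β * γ * u ^ (-(1 / γ)) + β * C / (1 / γ + δ) * u ^ (-(1 / γ) - δ)))
      =o[atTop] (fun u : ℝ => u ^ (-(1 / γ) - δ)) :=
  log_excess_expectation_expansion_general μ X hX β γ δ C hγ hδ hS
end

section
/- Suppose a nonnegative random variable X satisfies P(X > x) = β x^{-1/γ}{1 + C x^{-δ} + o(x^{-δ})} as x → ∞, with β, γ, δ > 0 and C ∈ ℝ. Then as u → ∞, E[(log(X/u))² · 1{X > u}] = 2 β γ² u^{-1/γ} + 2 (β C / (1/γ + δ)²) u^{-1/γ - δ} + o(u^{-1/γ - δ}). -/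
open Filter Real Asymptotics MeasureTheory

open Set

/-! By the layer-cake formula with weight `2t`,
`E[(log(X/u))² 1{X > u}] = ∫₀^∞ 2s P(X > u eˢ) ds`. For a pure power tail `x^{-p}` this
integral is exactly `2 u^{-p} / p²`, because `(u eˢ)^{-p} = u^{-p} e^{-ps}`. A remainder that is
`o(x^{-q})` contributes `o(u^{-q})`: the integral only samples the remainder at points
`u eˢ ≥ u`, where its bound holds uniformly once `u` is large. -/

noncomputable def logTailTransform (F : ℝ → ℝ) (u : ℝ) : ℝ :=
  ∫ s in Ioi 0, 2 * s * F (u * exp s)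

lemma antitone_measureReal_lt_s4 {Ω : Type*} [MeasurableSpace Ω] (μ : Measure Ω)
    [IsFiniteMeasure μ] (X : Ω → ℝ) : Antitone fun x => μ.real {ω | x < X ω} :=
  fun _ _ hxy => measureReal_mono fun _ hω => lt_of_le_of_lt hxy hω

lemma setOf_lt_indicator_log_div {Ω : Type*} {X : Ω → ℝ} {u s : ℝ} (hu : 0 < u) (hs : 0 < s) :
    {ω | s < {ω | u < X ω}.indicator (fun ω => log (X ω / u)) ω} = {ω | u * exp s < X ω} := by
  ext ω
  by_cases hω : u < X ω
  · have hXu : 0 < X ω / u := div_pos (hu.trans hω) hu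
    simp only [mem_ofPred_eq, indicator_of_mem (show ω ∈ {ω | u < X ω} from hω),
      lt_log_iff_exp_lt hXu, lt_div_iff₀ hu, mul_comm]
  · have hle : X ω ≤ u * exp s :=
      (not_lt.mp hω).trans (le_mul_of_one_le_right hu.le (one_le_exp hs.le))
    simp only [mem_ofPred_eq, indicator_of_notMem (show ω ∉ {ω | u < X ω} from hω),
      not_lt.mpr hs.le, not_lt.mpr hle]

theorem setIntegral_log_div_sq_eq_logTailTransform {Ω : Type*} [MeasurableSpace Ω]
    (μ : Measure Ω) [IsFiniteMeasure μ] {X : Ω → ℝ} (hX : Measurable X) {u : ℝ} (hu : 0 < u) :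
    ∫ ω in {ω | u < X ω}, log (X ω / u) ^ 2 ∂μ
      = logTailTransform (fun x => μ.real {ω | x < X ω}) u := by
  set S := {ω | u < X ω}
  set f := S.indicator fun ω => log (X ω / u)
  have hS : MeasurableSet S := measurableSet_lt measurable_const hX
  have hf_meas : Measurable f := (by fun_prop : Measurable fun ω => log (X ω / u)).indicator hS
  have hf_nn : 0 ≤ f := indicator_nonneg fun ω (hω : u < X ω) =>
    log_nonneg ((one_le_div hu).mpr hω.le)
  have hsq : ∀ ω, ∫ t in 0..f ω, 2 * t = f ω ^ 2 := fun ω => by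
    rw [intervalIntegral.integral_const_mul, integral_id]; ring
  have layer := lintegral_comp_eq_lintegral_meas_lt_mul μ (ae_of_all _ hf_nn)
    hf_meas.aemeasurable (g := fun t => 2 * t)
    (fun _ _ => (continuous_const_mul 2).intervalIntegrable _ _)
    ((ae_restrict_iff' measurableSet_Ioi).2 (ae_of_all _ fun t (ht : 0 < t) => by positivity))
  simp only [hsq] at layer
  have hind : S.indicator (fun ω => log (X ω / u) ^ 2) = fun ω => f ω ^ 2 := by
    ext ω; by_cases hω : ω ∈ S <;> simp [f, hω]
  have htail_meas : Measurable fun s => μ.real {ω | u * exp s < X ω} :=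
    (antitone_measureReal_lt_s4 μ X).measurable.comp (by fun_prop)
  rw [← integral_indicator hS, hind, logTailTransform,
    integral_eq_lintegral_of_nonneg_ae (ae_of_all _ fun ω => by positivity) (by fun_prop),
    integral_eq_lintegral_of_nonneg_ae
      ((ae_restrict_iff' measurableSet_Ioi).2 (ae_of_all _ fun s (hs : 0 < s) => by positivity))
      (by fun_prop), layer]
  congr 1
  refine setLIntegral_congr_fun measurableSet_Ioi fun s (hs : 0 < s) => ?_
  rw [setOf_lt_indicator_log_div hu hs, ENNReal.ofReal_mul' measureReal_nonneg,
    ofReal_measureReal, mul_comm]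

lemma mul_exp_rpow_neg {u : ℝ} (hu : 0 < u) (p s : ℝ) :
    (u * exp s) ^ (-p) = u ^ (-p) * exp (-(p * s)) := by
  rw [mul_rpow hu.le (exp_pos s).le, ← exp_mul]
  ring_nf

lemma integrableOn_mul_exp_neg_mul {r : ℝ} (hr : 0 < r) :
    IntegrableOn (fun s => s * exp (-(r * s))) (Ioi 0) := by
  refine (integrableOn_rpow_mul_exp_neg_mul_rpow (s := 1) (p := 1) (by norm_num) one_pos
    hr).congr_fun (fun s _ => ?_) measurableSet_Ioi
  simp only [rpow_one, neg_mul]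

lemma integral_mul_exp_neg_mul {r : ℝ} (hr : 0 < r) :
    ∫ s in Ioi 0, s * exp (-(r * s)) = 1 / r ^ 2 := by
  have h := integral_rpow_mul_exp_neg_mul_Ioi two_pos hr
  norm_num at h
  rw [h, ← rpow_natCast]; norm_num

lemma integrableOn_two_mul_mul_rpow_neg {u p : ℝ} (hu : 0 < u) (hp : 0 < p) :
    IntegrableOn (fun s => 2 * s * (u * exp s) ^ (-p)) (Ioi 0) := by
  refine IntegrableOn.congr_fun ((integrableOn_mul_exp_neg_mul hp).const_mul (2 * u ^ (-p)))
    (fun s _ => ?_) measurableSet_Ioi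
  simp only [mul_exp_rpow_neg hu]
  ring

lemma logTailTransform_rpow_neg {u p : ℝ} (hu : 0 < u) (hp : 0 < p) :
    logTailTransform (fun x => x ^ (-p)) u = 2 / p ^ 2 * u ^ (-p) := by
  calc logTailTransform (fun x => x ^ (-p)) u
      = ∫ s in Ioi 0, 2 * u ^ (-p) * (s * exp (-(p * s))) := by
        refine setIntegral_congr_fun measurableSet_Ioi fun s _ => ?_
        simp only [mul_exp_rpow_neg hu]
        ring
    _ = 2 / p ^ 2 * u ^ (-p) := by
        rw [integral_const_mul, integral_mul_exp_neg_mul hp]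
        ring

lemma norm_two_mul_mul_comp_mul_exp_le {R : ℝ → ℝ} {q ε M u : ℝ}
    (hR : ∀ x, M ≤ x → ‖R x‖ ≤ ε * x ^ (-q)) (hu : 0 < u) (huM : M ≤ u) {s : ℝ}
    (hs : 0 < s) : ‖2 * s * R (u * exp s)‖ ≤ ε * (2 * s * (u * exp s) ^ (-q)) := by
  have hMx : M ≤ u * exp s := huM.trans (le_mul_of_one_le_right hu.le (one_le_exp hs.le))
  rw [norm_mul, Real.norm_of_nonneg (by positivity)]
  calc 2 * s * ‖R (u * exp s)‖ ≤ 2 * s * (ε * (u * exp s) ^ (-q)) := by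
        gcongr; exact hR _ hMx
    _ = ε * (2 * s * (u * exp s) ^ (-q)) := by ring

lemma exists_forall_ge_norm_le_of_isLittleO_rpow_neg {R : ℝ → ℝ} {q ε : ℝ}
    (hR : R =o[atTop] fun x => x ^ (-q)) (hε : 0 < ε) :
    ∃ M, ∀ x, M ≤ x → ‖R x‖ ≤ ε * x ^ (-q) := by
  obtain ⟨M, hM⟩ := eventually_atTop.mp ((isLittleO_iff.mp hR hε).and (eventually_gt_atTop 0))
  refine ⟨M, fun x hx => ?_⟩
  obtain ⟨hbound, hx0⟩ := hM x hx
  rwa [Real.norm_of_nonneg (rpow_nonneg hx0.le _)] at hbound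

lemma eventually_integrableOn_two_mul_mul_comp_mul_exp {R : ℝ → ℝ} {q : ℝ} (hRm : Measurable R)
    (hR : R =o[atTop] fun x => x ^ (-q)) (hq : 0 < q) :
    ∀ᶠ u in atTop, IntegrableOn (fun s => 2 * s * R (u * exp s)) (Ioi 0) := by
  obtain ⟨M, hM⟩ := exists_forall_ge_norm_le_of_isLittleO_rpow_neg hR one_pos
  filter_upwards [eventually_ge_atTop M, eventually_gt_atTop 0] with u huM hu
  refine Integrable.mono' ((integrableOn_two_mul_mul_rpow_neg hu hq).const_mul 1)
    (by fun_prop) ((ae_restrict_iff' measurableSet_Ioi).2 (ae_of_all _ fun s hs => ?_))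
  exact norm_two_mul_mul_comp_mul_exp_le hM hu huM hs

lemma logTailTransform_isLittleO {R : ℝ → ℝ} {q : ℝ}
    (hR : R =o[atTop] fun x => x ^ (-q)) (hq : 0 < q) :
    logTailTransform R =o[atTop] fun u => u ^ (-q) := by
  refine isLittleO_iff.mpr fun c hc => ?_
  obtain ⟨M, hM⟩ :=
    exists_forall_ge_norm_le_of_isLittleO_rpow_neg hR (by positivity : 0 < c * q ^ 2 / 2)
  filter_upwards [eventually_ge_atTop M, eventually_gt_atTop 0] with u huM hu
  calc ‖logTailTransform R u‖
      ≤ ∫ s in Ioi 0, c * q ^ 2 / 2 * (2 * s * (u * exp s) ^ (-q)) :=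
        norm_integral_le_of_norm_le ((integrableOn_two_mul_mul_rpow_neg hu hq).const_mul _)
          ((ae_restrict_iff' measurableSet_Ioi).2
            (ae_of_all _ fun s hs => norm_two_mul_mul_comp_mul_exp_le hM hu huM hs))
    _ = c * ‖u ^ (-q)‖ := by
        rw [integral_const_mul, show ∫ s in Ioi 0, 2 * s * (u * exp s) ^ (-q)
          = logTailTransform (fun x => x ^ (-q)) u from rfl, logTailTransform_rpow_neg hu hq,
          Real.norm_of_nonneg (rpow_nonneg hu.le _)]
        field_simp

theorem logTailTransform_sub_isLittleO {F : ℝ → ℝ} (hF : Measurable F) {a b c₁ c₂ : ℝ}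
    (ha : 0 < a) (hb : 0 < b)
    (h : (fun x => F x - (c₁ * x ^ (-a) + c₂ * x ^ (-b))) =o[atTop] fun x => x ^ (-b)) :
    (fun u => logTailTransform F u - (2 * c₁ / a ^ 2 * u ^ (-a) + 2 * c₂ / b ^ 2 * u ^ (-b)))
      =o[atTop] fun u => u ^ (-b) := by
  set R := fun x => F x - (c₁ * x ^ (-a) + c₂ * x ^ (-b))
  have hRm : Measurable R := by fun_prop
  refine (logTailTransform_isLittleO h hb).congr' ?_ EventuallyEq.rfl
  filter_upwards [eventually_gt_atTop 0,
    eventually_integrableOn_two_mul_mul_comp_mul_exp hRm h hb] with u hu hRint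
  have hsplit : logTailTransform F u = c₁ * logTailTransform (fun x => x ^ (-a)) u
      + c₂ * logTailTransform (fun x => x ^ (-b)) u + logTailTransform R u := by
    simp only [logTailTransform]
    rw [← integral_const_mul, ← integral_const_mul, ← integral_add, ← integral_add]
    · refine setIntegral_congr_fun measurableSet_Ioi fun s _ => ?_
      simp only [R]
      ring
    · exact ((integrableOn_two_mul_mul_rpow_neg hu ha).const_mul _).add
        ((integrableOn_two_mul_mul_rpow_neg hu hb).const_mul _)
    · exact hRint
    · exact (integrableOn_two_mul_mul_rpow_neg hu ha).const_mul _
    · exact (integrableOn_two_mul_mul_rpow_neg hu hb).const_mul _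
  rw [hsplit, logTailTransform_rpow_neg hu ha, logTailTransform_rpow_neg hu hb]
  ring

theorem log_sq_excess_expectation_expansion_general
    {Ω : Type*} [MeasurableSpace Ω] (μ : Measure Ω) [IsProbabilityMeasure μ]
    (X : Ω → ℝ) (hX : Measurable X)
    (β γ δ C : ℝ) (hγ : 0 < γ) (hδ : 0 < δ)
    (hS : (fun x : ℝ => (μ {ω | x < X ω}).toReal - β * x ^ (-(1 / γ)) * (1 + C * x ^ (-δ)))
      =o[atTop] (fun x : ℝ => x ^ (-(1 / γ) - δ))) :
    (fun u : ℝ => (∫ ω in {ω | u < X ω}, (Real.log (X ω / u)) ^ 2 ∂μ) -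
        (2 * β * γ ^ 2 * u ^ (-(1 / γ)) + 2 * (β * C / (1 / γ + δ) ^ 2) * u ^ (-(1 / γ) - δ)))
      =o[atTop] (fun u : ℝ => u ^ (-(1 / γ) - δ)) := by
  have ha : 0 < 1 / γ := by positivity
  have hb : 0 < 1 / γ + δ := by positivity
  have hexp : -(1 / γ) - δ = -(1 / γ + δ) := by ring
  have htail : (fun x => μ.real {ω | x < X ω}
      - (β * x ^ (-(1 / γ)) + β * C * x ^ (-(1 / γ + δ))))
      =o[atTop] fun x => x ^ (-(1 / γ + δ)) := by
    rw [← hexp]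
    refine hS.congr' ?_ EventuallyEq.rfl
    filter_upwards [eventually_gt_atTop 0] with x hx
    rw [measureReal_def, sub_eq_add_neg (-(1 / γ)), rpow_add hx]
    ring
  rw [hexp]
  refine (logTailTransform_sub_isLittleO (antitone_measureReal_lt_s4 μ X).measurable ha hb
    htail).congr' ?_ EventuallyEq.rfl
  filter_upwards [eventually_gt_atTop 0] with u hu
  rw [setIntegral_log_div_sq_eq_logTailTransform μ hX hu]
  field_simp

/-- If a nonnegative random variable `X` satisfies
`P(X > x) = β x^{-1/γ}(1 + C x^{-δ} + o(x^{-δ}))` as `x → ∞` with `β, γ, δ > 0`,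
then as `u → ∞`,
`E[(log(X/u))² 1{X > u}] = 2βγ² u^{-1/γ} + 2(βC/(1/γ+δ)²) u^{-1/γ-δ} + o(u^{-1/γ-δ})`. -/
theorem log_sq_excess_expectation_expansion
    {Ω : Type*} [MeasurableSpace Ω] (μ : Measure Ω) [IsProbabilityMeasure μ]
    (X : Ω → ℝ) (hX : Measurable X) (hXpos : ∀ ω, 0 ≤ X ω)
    (β γ δ C : ℝ) (hβ : 0 < β) (hγ : 0 < γ) (hδ : 0 < δ)
    (hS : (fun x : ℝ => (μ {ω | x < X ω}).toReal - β * x ^ (-(1 / γ)) * (1 + C * x ^ (-δ)))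
      =o[atTop] (fun x : ℝ => x ^ (-(1 / γ) - δ))) :
    (fun u : ℝ => (∫ ω in {ω | u < X ω}, (Real.log (X ω / u)) ^ 2 ∂μ) -
        (2 * β * γ ^ 2 * u ^ (-(1 / γ)) + 2 * (β * C / (1 / γ + δ) ^ 2) * u ^ (-(1 / γ) - δ)))
      =o[atTop] (fun u : ℝ => u ^ (-(1 / γ) - δ)) :=
  log_sq_excess_expectation_expansion_general μ X hX β γ δ C hγ hδ hS
end

section
/- Let q_{1−τ} satisfy P(X > q_{1−τ}) = τ and define the approximate quantile q^{(a)}_{1−τ} = u (α_u/τ)^γ with α_u = P(X > u). If P(X > x) = β x^{-1/γ}(1 + C x^{-δ} + o(x^{-δ})) as x → ∞ with β, γ, δ > 0, and u → ∞ with 0 < τ < α_u and τ → 0, then q^{(a)}_{1−τ} / q_{1−τ} → 1. -/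
open Filter Real Asymptotics MeasureTheory Topology

/-!
The normalized tail `h x = x ^ (1/γ) P(X > x)` tends to `β`. Since `α_u = u ^ (-1/γ) h u` and
`τ = q ^ (-1/γ) h q`, the ratio `q^{(a)}_{1-τ} / q_{1-τ}` equals exactly `(h u / h q) ^ γ`,
which tends to `(β / β) ^ γ = 1` because both `u` and `q` tend to infinity.
-/

theorem tendsto_mul_rpow_of_isLittleO_second_order {f : ℝ → ℝ} {β a δ C : ℝ} (hδ : 0 < δ)
    (hf : (fun x => f x - β * x ^ (-a) * (1 + C * x ^ (-δ))) =o[atTop]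
      fun x => x ^ (-a - δ)) :
    Tendsto (fun x => f x * x ^ a) atTop (𝓝 β) := by
  have hδ_lim : Tendsto (fun x : ℝ => x ^ (-δ)) atTop (𝓝 0) := tendsto_rpow_neg_atTop hδ
  have herr : Tendsto (fun x => (f x - β * x ^ (-a) * (1 + C * x ^ (-δ))) * x ^ a)
      atTop (𝓝 0) := by
    have hrate : (fun x : ℝ => x ^ (-a - δ) * x ^ a) =ᶠ[atTop] fun x => x ^ (-δ) := by
      filter_upwards [eventually_gt_atTop 0] with x hx
      rw [← rpow_add hx]
      ring_nf
    exact ((hf.mul_isBigO (isBigO_refl (fun x : ℝ => x ^ a) atTop)).trans_eventuallyEq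
      hrate).trans_tendsto hδ_lim
  have hmain : Tendsto (fun x : ℝ => β * (1 + C * x ^ (-δ))) atTop (𝓝 β) := by
    simpa using ((hδ_lim.const_mul C).const_add 1).const_mul β
  have hsum : Tendsto (fun x => (f x - β * x ^ (-a) * (1 + C * x ^ (-δ))) * x ^ a
      + β * (1 + C * x ^ (-δ))) atTop (𝓝 β) := by
    simpa using herr.add hmain
  refine hsum.congr' ?_
  filter_upwards [eventually_gt_atTop 0] with x hx
  have hcancel : x ^ (-a) * x ^ a = 1 := by rw [← rpow_add hx, neg_add_cancel, rpow_zero]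
  linear_combination (-(β * (1 + C * x ^ (-δ)))) * hcancel

theorem mul_div_rpow_div_eq_rpow {u q a b γ : ℝ} (hu : 0 < u) (hq : 0 < q) (hγ : γ ≠ 0)
    (hab : 0 ≤ a * u ^ (1 / γ) / (b * q ^ (1 / γ))) :
    u * (a / b) ^ γ / q = (a * u ^ (1 / γ) / (b * q ^ (1 / γ))) ^ γ := by
  have hsplit : a / b = a * u ^ (1 / γ) / (b * q ^ (1 / γ)) * (q / u) ^ (1 / γ) := by
    rw [div_rpow hq.le hu.le]
    have := (rpow_pos_of_pos hu (1 / γ)).ne'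
    have := (rpow_pos_of_pos hq (1 / γ)).ne'
    field_simp
  rw [hsplit, mul_rpow hab (rpow_nonneg (div_pos hq hu).le _), one_div,
    rpow_inv_rpow (div_pos hq hu).le hγ]
  field_simp

theorem weissman_quantile_consistency_general
    {Ω : Type*} [MeasurableSpace Ω] (μ : Measure Ω)
    (X : Ω → ℝ) (β γ δ C : ℝ) (hβ : 0 < β) (hγ : 0 < γ) (hδ : 0 < δ)
    (hS : (fun x : ℝ => (μ {ω | x < X ω}).toReal - β * x ^ (-(1 / γ)) * (1 + C * x ^ (-δ)))
      =o[atTop] (fun x : ℝ => x ^ (-(1 / γ) - δ)))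
    (u τ q : ℕ → ℝ)
    (hu : Tendsto u atTop atTop)
    (hq : ∀ i, (μ {ω | q i < X ω}).toReal = τ i)
    (hqinf : Tendsto q atTop atTop) :
    Tendsto (fun i => u i * ((μ {ω | u i < X ω}).toReal / τ i) ^ γ / q i)
      atTop (nhds 1) := by
  set h : ℝ → ℝ := fun x => (μ {ω | x < X ω}).toReal * x ^ (1 / γ)
  have hh : Tendsto h atTop (𝓝 β) := tendsto_mul_rpow_of_isLittleO_second_order hδ hS
  have hratio : Tendsto (fun i => h (u i) / h (q i)) atTop (𝓝 1) := by
    rw [← div_self hβ.ne']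
    exact (hh.comp hu).div (hh.comp hqinf) hβ.ne'
  have hlim : Tendsto (fun i => (h (u i) / h (q i)) ^ γ) atTop (𝓝 1) := by
    simpa using hratio.rpow_const (p := γ) (Or.inl one_ne_zero)
  refine hlim.congr' ?_
  filter_upwards [hu.eventually_gt_atTop 0, hqinf.eventually_gt_atTop 0,
    hratio.eventually (eventually_gt_nhds one_pos)] with i hui hqi hpos
  rw [← hq i]
  exact (mul_div_rpow_div_eq_rpow hui hqi hγ.ne' hpos.le).symm

/-- Consistency of the Weissman-type approximate quantile: if
`P(X > x) = β x^{-1/γ}(1 + C x^{-δ} + o(x^{-δ}))` with `β, γ, δ > 0`, the exact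
quantile `q_{1-τ}` satisfies `P(X > q_{1-τ}) = τ`, the approximation is
`q^{(a)}_{1-τ} = u (α_u/τ)^γ` with `α_u = P(X > u)`, and `u → ∞`, `0 < τ < α_u`,
`τ → 0` (so `q_{1-τ} → ∞`), then `q^{(a)}_{1-τ} / q_{1-τ} → 1`. -/
theorem weissman_quantile_consistency
    {Ω : Type*} [MeasurableSpace Ω] (μ : Measure Ω) [IsProbabilityMeasure μ]
    (X : Ω → ℝ) (β γ δ C : ℝ) (hβ : 0 < β) (hγ : 0 < γ) (hδ : 0 < δ)
    (hS : (fun x : ℝ => (μ {ω | x < X ω}).toReal - β * x ^ (-(1 / γ)) * (1 + C * x ^ (-δ)))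
      =o[atTop] (fun x : ℝ => x ^ (-(1 / γ) - δ)))
    (u τ q : ℕ → ℝ)
    (hu : Tendsto u atTop atTop)
    (hq : ∀ i, (μ {ω | q i < X ω}).toReal = τ i)
    (hτpos : ∀ i, 0 < τ i) (hτlt : ∀ i, τ i < (μ {ω | u i < X ω}).toReal)
    (hτ0 : Tendsto τ atTop (nhds 0)) (hqinf : Tendsto q atTop atTop) :
    Tendsto (fun i => u i * ((μ {ω | u i < X ω}).toReal / τ i) ^ γ / q i)
      atTop (nhds 1) :=
  weissman_quantile_consistency_general μ X β γ δ C hβ hγ hδ hS u τ q hu hq hqinf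
end

section
/- For the Student's t-distribution with v degrees of freedom, the right tail probability satisfies P(X > u) = (Γ((v+1)/2) v^{(v−1)/2}) / (√(vπ) Γ(v/2)) · u^{-v} · {1 − v²(v+1)/(2(v+2)) u^{-2} + o(u^{-2})} as u → ∞. In particular the extreme value index is γ = 1/v. -/
open Filter Real Asymptotics MeasureTheory Set Topology

/-!
Writing `1 + x²/v = (x²/v) (1 + v/x²)`, the elementary bound `|(1 + t)^{-s} - (1 - s t)| ≤ (s + 1)² t²`
for `t ≥ 0` expands the kernel as `v^s x^{-2s} - s v^{s+1} x^{-2s-2}` with an error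
`O(x^{-2s-4})` that is uniform in `x > 0`. Integrating term by term over `(u, ∞)` gives the
two-term expansion with remainder `O(u^{-v-4})`. In particular the tail is asymptotically
equivalent to a constant multiple of `u^{-v}`, which forces `tail (t u) / tail u → t^{-v}`.
-/

theorem abs_one_add_rpow_neg_sub_le {s t : ℝ} (hs : 0 < s) (ht : 0 ≤ t) :
    |(1 + t) ^ (-s) - (1 - s * t)| ≤ (s + 1) ^ 2 * t ^ 2 := by
  have h1t : 0 < 1 + t := by linarith
  have lower : 1 - s * t ≤ (1 + t) ^ (-s) :=
    calc 1 - s * t ≤ 1 - s * log (1 + t) := by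
          gcongr; linarith [log_le_sub_one_of_pos h1t]
      _ ≤ exp (-s * log (1 + t)) := by linarith [add_one_le_exp (-s * log (1 + t))]
      _ = (1 + t) ^ (-s) := by rw [rpow_def_of_pos h1t, mul_comm]
  have upper : (1 + t) ^ (-s) ≤ 1 - s * t + (s + 1) ^ 2 * t ^ 2 := by
    have hbpos : 0 < 1 + (s + 2) * t := by positivity
    calc (1 + t) ^ (-s) = (1 + t) ^ (2 : ℝ) / (1 + t) ^ (s + 2) := by
          rw [← rpow_sub h1t]; ring_nf
      _ ≤ (1 + t) ^ (2 : ℝ) / (1 + (s + 2) * t) := by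
          gcongr; exact one_add_mul_self_le_rpow_one_add (by linarith) (by linarith)
      _ ≤ 1 - s * t + (s + 1) ^ 2 * t ^ 2 := by
          -- the slack is exactly `(s + 1)² (s + 2) t³`
          rw [rpow_two, div_le_iff₀ hbpos]
          nlinarith [mul_nonneg (mul_nonneg (sq_nonneg (s + 1)) (by linarith : 0 ≤ s + 2))
            (pow_nonneg ht 3)]
  rw [abs_le]
  constructor <;> nlinarith

theorem abs_one_add_rpow_neg_sub_rpow_le {s y : ℝ} (hs : 0 < s) (hy : 0 < y) :
    |(1 + y) ^ (-s) - (y ^ (-s) - s * y ^ (-(s + 1)))| ≤ (s + 1) ^ 2 * y ^ (-(s + 2)) := by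
  have hfac : (1 + y) ^ (-s) = y ^ (-s) * (1 + y⁻¹) ^ (-s) := by
    rw [← mul_rpow hy.le (by positivity), mul_add, mul_one, mul_inv_cancel₀ hy.ne', add_comm]
  have h1 : y ^ (-(s + 1)) = y ^ (-s) * y⁻¹ := by
    rw [neg_add, rpow_add hy, rpow_neg_one]
  have h2 : y ^ (-(s + 2)) = y ^ (-s) * y⁻¹ ^ 2 := by
    rw [neg_add, rpow_add hy, rpow_neg hy.le 2, rpow_two, inv_pow]
  calc |(1 + y) ^ (-s) - (y ^ (-s) - s * y ^ (-(s + 1)))|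
      = |y ^ (-s) * ((1 + y⁻¹) ^ (-s) - (1 - s * y⁻¹))| := by rw [hfac, h1]; congr 1; ring
    _ = y ^ (-s) * |(1 + y⁻¹) ^ (-s) - (1 - s * y⁻¹)| := by
        rw [abs_mul, abs_of_pos (rpow_pos_of_pos hy _)]
    _ ≤ y ^ (-s) * ((s + 1) ^ 2 * y⁻¹ ^ 2) := by
        gcongr; exact abs_one_add_rpow_neg_sub_le hs (by positivity)
    _ = (s + 1) ^ 2 * y ^ (-(s + 2)) := by rw [h2]; ring

theorem sq_div_rpow_neg {x v : ℝ} (hx : 0 < x) (hv : 0 < v) (r : ℝ) :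
    (x ^ 2 / v) ^ (-r) = v ^ r * x ^ (-(2 * r)) := by
  rw [div_rpow (by positivity) hv.le, ← rpow_natCast x 2, ← rpow_mul hx.le, rpow_neg hv.le,
    div_inv_eq_mul, mul_comm]
  norm_num

theorem integral_Ioi_rpow_neg {a u : ℝ} (ha : 1 < a) (hu : 0 < u) :
    ∫ x in Ioi u, x ^ (-a) = u ^ (1 - a) / (a - 1) := by
  rw [integral_Ioi_rpow_of_lt (by linarith) hu, ← neg_div_neg_eq, neg_neg]
  ring_nf

theorem abs_integral_Ioi_one_add_sq_div_rpow_neg_sub_le {s v u : ℝ} (hs : 1 / 2 < s)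
    (hv : 0 < v) (hu : 0 < u) :
    |(∫ x in Ioi u, (1 + x ^ 2 / v) ^ (-s)) -
        (v ^ s * (u ^ (1 - 2 * s) / (2 * s - 1)) -
          s * v ^ (s + 1) * (u ^ (1 - 2 * (s + 1)) / (2 * (s + 1) - 1)))|
      ≤ (s + 1) ^ 2 * v ^ (s + 2) * (u ^ (1 - 2 * (s + 2)) / (2 * (s + 2) - 1)) := by
  have hs0 : 0 < s := by linarith
  have hpow : ∀ a : ℝ, 1 < a → IntegrableOn (fun x : ℝ => x ^ (-a)) (Ioi u) :=
    fun a ha => integrableOn_Ioi_rpow_of_lt (by linarith) hu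
  set P : ℝ → ℝ := fun x => v ^ s * x ^ (-(2 * s)) - s * v ^ (s + 1) * x ^ (-(2 * (s + 1)))
  have hP : IntegrableOn P (Ioi u) :=
    ((hpow _ (by linarith)).const_mul _).sub ((hpow _ (by linarith)).const_mul _)
  have hf : IntegrableOn (fun x : ℝ => (1 + x ^ 2 / v) ^ (-s)) (Ioi u) := by
    refine ((hpow (2 * s) (by linarith)).const_mul (v ^ s)).mono' ?_ ?_
    · exact (Continuous.rpow_const (by fun_prop) fun x => Or.inl (by positivity))
        |>.aestronglyMeasurable
    · refine ae_restrict_of_forall_mem measurableSet_Ioi fun x hx => ?_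
      have hx0 : 0 < x := hu.trans hx
      rw [norm_of_nonneg (by positivity), ← sq_div_rpow_neg hx0 hv]
      exact rpow_le_rpow_of_nonpos (by positivity) (by linarith) (by linarith)
  have hbound : ∀ x ∈ Ioi u,
      ‖(1 + x ^ 2 / v) ^ (-s) - P x‖ ≤ (s + 1) ^ 2 * v ^ (s + 2) * x ^ (-(2 * (s + 2))) := by
    intro x hx
    have hx0 : 0 < x := hu.trans hx
    have h := abs_one_add_rpow_neg_sub_rpow_le hs0 (by positivity : 0 < x ^ 2 / v)
    simpa only [sq_div_rpow_neg hx0 hv, P, norm_eq_abs, mul_assoc] using h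
  have hintP : ∫ x in Ioi u, P x = v ^ s * (u ^ (1 - 2 * s) / (2 * s - 1)) -
      s * v ^ (s + 1) * (u ^ (1 - 2 * (s + 1)) / (2 * (s + 1) - 1)) := by
    rw [integral_sub ((hpow _ (by linarith)).const_mul _) ((hpow _ (by linarith)).const_mul _),
      integral_const_mul, integral_const_mul, integral_Ioi_rpow_neg (by linarith) hu,
      integral_Ioi_rpow_neg (by linarith) hu]
  calc _ = ‖∫ x in Ioi u, ((1 + x ^ 2 / v) ^ (-s) - P x)‖ := by
        rw [integral_sub hf hP, hintP, norm_eq_abs]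
    _ ≤ ∫ x in Ioi u, (s + 1) ^ 2 * v ^ (s + 2) * x ^ (-(2 * (s + 2))) :=
        norm_integral_le_of_norm_le ((hpow _ (by linarith)).const_mul _)
          (ae_restrict_of_forall_mem measurableSet_Ioi hbound)
    _ = _ := by rw [integral_const_mul, integral_Ioi_rpow_neg (by linarith) hu]

theorem integral_Ioi_student_kernel_sub_isBigO {v : ℝ} (hv : 0 < v) :
    (fun u : ℝ => (∫ x in Ioi u, (1 + x ^ 2 / v) ^ (-((v + 1) / 2))) -
        v ^ ((v - 1) / 2) * u ^ (-v) * (1 - v ^ 2 * (v + 1) / (2 * (v + 2)) * u ^ (-(2 : ℝ))))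
      =O[atTop] fun u => u ^ (-(v + 4)) := by
  set s := (v + 1) / 2 with hs
  refine isBigO_iff.2 ⟨(s + 1) ^ 2 * v ^ (s + 2) / (v + 4), ?_⟩
  filter_upwards [eventually_gt_atTop 0] with u hu
  have h := abs_integral_Ioi_one_add_sq_div_rpow_neg_sub_le (by linarith : 1 / 2 < s) hv hu
  have hvs : v ^ s = v ^ ((v - 1) / 2) * v := by
    rw [← rpow_add_one hv.ne', hs]; ring_nf
  have hvs1 : v ^ (s + 1) = v ^ ((v - 1) / 2) * v ^ 2 := by
    rw [← rpow_natCast, ← rpow_add hv, hs]; ring_nf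
  have hu2 : u ^ (1 - 2 * (s + 1)) = u ^ (-v) * u ^ (-(2 : ℝ)) := by
    rw [← rpow_add hu, hs]; ring_nf
  rw [show 1 - 2 * s = -v by ring, show 2 * s - 1 = v by ring, show 2 * (s + 1) - 1 = v + 2 by ring,
    show 1 - 2 * (s + 2) = -(v + 4) by ring, show 2 * (s + 2) - 1 = v + 4 by ring,
    hvs, hvs1, hu2] at h
  calc _ = |(∫ x in Ioi u, (1 + x ^ 2 / v) ^ (-s)) -
        (v ^ ((v - 1) / 2) * v * (u ^ (-v) / v) -
          s * (v ^ ((v - 1) / 2) * v ^ 2) * (u ^ (-v) * u ^ (-(2 : ℝ)) / (v + 2)))| := by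
        rw [norm_eq_abs]; congr 2; field_simp; ring
    _ ≤ _ := h
    _ = _ := by rw [norm_of_nonneg (by positivity)]; ring

theorem isLittleO_mul_of_tendsto_zero {α : Type*} {l : Filter α} {g h : α → ℝ}
    (hh : Tendsto h l (𝓝 0)) : (fun x => g x * h x) =o[l] g := by
  simpa using (isBigO_refl g l).mul_isLittleO ((isLittleO_one_iff ℝ).2 hh)

theorem isEquivalent_of_sub_mul_one_sub_isLittleO {α : Type*} {l : Filter α} {f g h : α → ℝ}
    {a b : ℝ} (ha : a ≠ 0) (hh : Tendsto h l (𝓝 0))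
    (hf : (fun x => f x - a * g x * (1 - b * h x)) =o[l] fun x => g x * h x) :
    f ~[l] fun x => a * g x := by
  have hgh := isLittleO_mul_of_tendsto_zero (g := g) hh
  refine (isLittleO_const_mul_right_iff ha).2 ?_
  refine ((hf.trans hgh).sub (hgh.const_mul_left (a * b))).congr_left fun x => ?_
  simp only [Pi.sub_apply]
  ring

theorem tendsto_comp_mul_div_of_isEquivalent_rpow {f : ℝ → ℝ} {a v t : ℝ} (ha : a ≠ 0)
    (ht : 0 < t) (hf : f ~[atTop] fun u => a * u ^ (-v)) :
    Tendsto (fun u => f (t * u) / f u) atTop (𝓝 (t ^ (-v))) := by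
  have hft : (fun u => f (t * u)) ~[atTop] fun u => a * (t * u) ^ (-v) :=
    hf.comp_tendsto (tendsto_id.const_mul_atTop ht)
  refine (hft.div hf).symm.tendsto_nhds (tendsto_const_nhds.congr' ?_)
  filter_upwards [eventually_gt_atTop 0] with u hu
  have hu' : u ^ (-v) ≠ 0 := (rpow_pos_of_pos hu _).ne'
  simp only [Pi.div_apply, mul_rpow ht.le hu.le]
  field_simp

/-- Student's t tail expansion: with `v > 0` degrees of freedom and density
`f(x) = Γ((v+1)/2)/(√(vπ) Γ(v/2)) (1 + x²/v)^{-(v+1)/2}`, the right tail satisfies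
`P(X > u) = (Γ((v+1)/2) v^{(v-1)/2})/(√(vπ) Γ(v/2)) u^{-v} (1 − v²(v+1)/(2(v+2)) u^{-2} + o(u^{-2}))`
as `u → ∞`. In particular `P(X > tu)/P(X > u) → t^{-v}` for all `t > 1`, i.e. the
extreme value index is `γ = 1/v`. -/
theorem student_t_tail_expansion (v : ℝ) (hv : 0 < v)
    (c : ℝ) (hc : c = Real.Gamma ((v + 1) / 2) / (Real.sqrt (v * π) * Real.Gamma (v / 2)))
    (tail : ℝ → ℝ)
    (htail : ∀ u : ℝ, tail u = ∫ x in Set.Ioi u, c * (1 + x ^ 2 / v) ^ (-((v + 1) / 2))) :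
    (fun u : ℝ => tail u -
        c * v ^ ((v - 1) / 2) * u ^ (-v) * (1 - v ^ 2 * (v + 1) / (2 * (v + 2)) * u ^ (-(2:ℝ))))
      =o[atTop] (fun u : ℝ => u ^ (-v) * u ^ (-(2:ℝ))) ∧
    ∀ t : ℝ, 1 < t →
      Tendsto (fun u : ℝ => tail (t * u) / tail u) atTop (nhds (t ^ (-v))) := by
  have hc0 : c ≠ 0 := by rw [hc]; positivity
  have hu2 : Tendsto (fun u : ℝ => u ^ (-(2 : ℝ))) atTop (𝓝 0) := tendsto_rpow_neg_atTop two_pos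
  have hrem : (fun u : ℝ => u ^ (-(v + 4))) =o[atTop] fun u => u ^ (-v) * u ^ (-(2 : ℝ)) := by
    refine (isLittleO_mul_of_tendsto_zero hu2).congr' ?_ EventuallyEq.rfl
    filter_upwards [eventually_gt_atTop 0] with u hu
    rw [← rpow_add hu, ← rpow_add hu]
    ring_nf
  have hexp : (fun u : ℝ => tail u -
      c * v ^ ((v - 1) / 2) * u ^ (-v) * (1 - v ^ 2 * (v + 1) / (2 * (v + 2)) * u ^ (-(2:ℝ))))
        =o[atTop] fun u : ℝ => u ^ (-v) * u ^ (-(2:ℝ)) :=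
    (((integral_Ioi_student_kernel_sub_isBigO hv).const_mul_left c).trans_isLittleO hrem).congr_left
      fun u => by rw [htail, integral_const_mul]; ring
  have hck : c * v ^ ((v - 1) / 2) ≠ 0 := mul_ne_zero hc0 (rpow_pos_of_pos hv _).ne'
  exact ⟨hexp, fun t ht => tendsto_comp_mul_div_of_isEquivalent_rpow hck (by linarith)
    (isEquivalent_of_sub_mul_one_sub_isLittleO hck hu2 hexp)⟩
end
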